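/- Let T be a tree with edge weight uncertainty intervals and ρ > 0, and let x be a vertex with a worst-case scenario s̈(x) (i.e., max_r(x) = b_time^{s̈(x)}(x,T) − b_time^{s̈(x)}(y,T) for some broadcast center y under s̈(x)). If x ∉ B_Ctr^{s̈(x)} and κ ∈ B_Ctr^{s̈(x)}, then every vertex x' not in V(O(x,κ)) ∪ {x} satisfies max_r(x') > max_r(x); hence a minmax-regret broadcast center of T lies in V(O(x,κ)) ∪ {x}. -/
import Mathlib


/-!
Common definitions for the postal-model broadcasting problem on weighted trees.
-/

open SimpleGraph

namespace Postal

attribute [local instance] Classical.propDecidable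

variable {V : Type*} [Fintype V] [DecidableEq V] (G : SimpleGraph V)

/-- The unique path (as a walk) between two vertices of a tree. -/
noncomputable def tPath (hG : G.IsTree) (u v : V) : G.Walk u v :=
  (hG.existsUnique_path u v).exists.choose

/-- `z` lies in the open branch `O(x,y)`: the component of `T - x` containing `y`. -/
def inO (x y z : V) : Prop := ∃ p : G.Walk y z, x ∉ p.support

/-- The open branch `O(x,y)`. -/
def Obr (x y : V) : Set V := {z | inO G x y z}

/-- The closed branch `B(x,y) = T - O(x,y)` (it contains `x`). -/
def Bbr (x y : V) : Set V := {z | ¬ inO G x y z}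

/-- The parent of `z` with respect to the root `u`: the penultimate vertex on the
unique `u`-to-`z` path. -/
noncomputable def parent (hG : G.IsTree) (u z : V) : V :=
  (tPath G hG u z).getVert ((tPath G hG u z).length - 1)

/-- The receive time of `z` under schedule `σ` when `u` originates the message:
along the unique `u`-to-`z` path, each vertex is contacted in its slot `σ`,
contributing `σ·ρ` connection time plus the edge weight. -/
noncomputable def recvTime (hG : G.IsTree) (w : V → V → ℝ) (ρ : ℝ) (σ : V → ℕ) (u z : V) : ℝ :=
  ((tPath G hG u z).darts.map (fun d => (σ d.toProd.2 : ℝ) * ρ + w d.toProd.1 d.toProd.2)).sum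

/-- A schedule `σ` is valid for source `u` broadcasting over the vertex set `S`:
every non-source vertex gets a slot `≥ 1`, and distinct vertices with the same
parent get distinct slots (a sender contacts its neighbors sequentially). -/
def Valid (hG : G.IsTree) (σ : V → ℕ) (u : V) (S : Set V) : Prop :=
  (∀ z ∈ S, z ≠ u → 1 ≤ σ z) ∧
  (∀ z₁ ∈ S, ∀ z₂ ∈ S, z₁ ≠ u → z₂ ≠ u → z₁ ≠ z₂ →
    parent G hG u z₁ = parent G hG u z₂ → σ z₁ ≠ σ z₂)

/-- The minimum broadcast time for `u` to broadcast a message over the subtree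
induced by `S` under the postal model with latency `ρ`. -/
noncomputable def bTime (hG : G.IsTree) (w : V → V → ℝ) (ρ : ℝ) (u : V) (S : Set V) : ℝ :=
  sInf {m | ∃ σ, Valid G hG σ u S ∧ m = sSup ((recvTime G hG w ρ σ u) '' S)}

/-- Broadcast time over the whole tree. -/
noncomputable def bTimeT (hG : G.IsTree) (w : V → V → ℝ) (ρ : ℝ) (u : V) : ℝ :=
  bTime G hG w ρ u Set.univ

/-- The set of broadcast centers. -/
def BCtr (hG : G.IsTree) (w : V → V → ℝ) (ρ : ℝ) : Set V :=
  {u | ∀ v, bTimeT G hG w ρ u ≤ bTimeT G hG w ρ v}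

/-- A prime broadcast center. -/
def IsPrime (hG : G.IsTree) (w : V → V → ℝ) (ρ : ℝ) (κ : V) : Prop :=
  κ ∈ BCtr G hG w ρ ∧
  ∀ u, G.Adj κ u → bTime G hG w ρ u (Bbr G u κ) ≤ bTime G hG w ρ κ (Bbr G κ u)

/-- Hop distance: number of edges on the unique path. -/
noncomputable def hop (hG : G.IsTree) (x y : V) : ℕ := (tPath G hG x y).length

/-- Total weight of the unique `x`-to-`y` path. -/
noncomputable def pw (hG : G.IsTree) (w : V → V → ℝ) (x y : V) : ℝ :=
  ((tPath G hG x y).darts.map (fun d => w d.toProd.1 d.toProd.2)).sum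

/-- Symmetric weight function. -/
def Wsymm (w : V → V → ℝ) : Prop := ∀ a b, w a b = w b a

/-- Positive weights on edges. -/
def Wpos (w : V → V → ℝ) : Prop := ∀ a b, G.Adj a b → 0 < w a b

/-- A scenario: a symmetric weight assignment within the uncertainty intervals. -/
def Scenario (lo hi : V → V → ℝ) (w : V → V → ℝ) : Prop :=
  (∀ a b, w a b = w b a) ∧ ∀ a b, G.Adj a b → lo a b ≤ w a b ∧ w a b ≤ hi a b

/-- The maximum regret of `x`. -/
noncomputable def maxRegret (hG : G.IsTree) (lo hi : V → V → ℝ) (ρ : ℝ) (x : V) : ℝ :=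
  sSup {r | ∃ w y, Scenario G lo hi w ∧ r = bTimeT G hG w ρ x - bTimeT G hG w ρ y}

/-- `w` is a worst-case scenario of the tree with respect to `x`. -/
def WorstCase (hG : G.IsTree) (lo hi : V → V → ℝ) (ρ : ℝ) (x : V) (w : V → V → ℝ) : Prop :=
  Scenario G lo hi w ∧
  ∃ y, bTimeT G hG w ρ x - bTimeT G hG w ρ y = maxRegret G hG lo hi ρ x

/-- An edge `(a,b)` lies on the unique `x`-to-`y` path. -/
def onPath (hG : G.IsTree) (x y a b : V) : Prop :=
  a ∈ (tPath G hG x y).support ∧ b ∈ (tPath G hG x y).support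

/-- The base scenario `α_{x,y}`: weight `hi` on the `x`-to-`y` path and on edges of
`B(y,x)`, weight `lo` elsewhere. -/
noncomputable def baseScenario (hG : G.IsTree) (lo hi : V → V → ℝ) (x y : V) : V → V → ℝ :=
  fun a b =>
    if onPath G hG x y a b ∨ (a ∈ Bbr G y x ∧ b ∈ Bbr G y x) then hi a b else lo a b

/-- The value `w(y,v) + b_time(v, B(v,y))` of a neighbor `v` of `y`. -/
noncomputable def nval (hG : G.IsTree) (w : V → V → ℝ) (ρ : ℝ) (y v : V) : ℝ :=
  w y v + bTime G hG w ρ v (Bbr G v y)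

/-- Scenario `β^j_{x,y}`: agrees with `α_{x,y}`, except that every edge in
`{(y,u_k)} ∪ E(B(u_k,y))` for `k > j` (with `u` the 1-based sorted enumeration
of the neighbors of `y` in `B(y,x)`) gets weight `lo`. -/
noncomputable def betaScenario (hG : G.IsTree) (lo hi : V → V → ℝ) (x y : V) {h : ℕ}
    (u : Fin h → V) (j : ℕ) : V → V → ℝ :=
  fun a b =>
    if ∃ k : Fin h, j < (k : ℕ) + 1 ∧
        ((a = y ∧ b = u k) ∨ (b = y ∧ a = u k) ∨
          (a ∈ Bbr G (u k) y ∧ b ∈ Bbr G (u k) y)) then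
      lo a b
    else baseScenario G hG lo hi x y a b

/-- Scenario `γ^j_{x,y}`: agrees with `α_{x,y}` on the edges in
`⋃_{1 ≤ k ≤ j} ({(y,u_k)} ∪ E(B(u_k,y)))` and with the scenario `s` elsewhere. -/
noncomputable def gammaScenario (hG : G.IsTree) (lo hi : V → V → ℝ) (s : V → V → ℝ)
    (x y : V) {h : ℕ} (u : Fin h → V) (j : ℕ) : V → V → ℝ :=
  fun a b =>
    if ∃ k : Fin h, (k : ℕ) + 1 ≤ j ∧
        ((a = y ∧ b = u k) ∨ (b = y ∧ a = u k) ∨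
          (a ∈ Bbr G (u k) y ∧ b ∈ Bbr G (u k) y)) then
      baseScenario G hG lo hi x y a b
    else s a b

/-- The set of neighbors of `y` inside the branch `B(y,x)`. -/
def nbrIn (x y : V) : Set V := {v | G.Adj y v ∧ v ∈ Bbr G y x}


/-! ### Auxiliary lemmas -/

section Aux

variable {V : Type*} [Fintype V] [DecidableEq V] {G : SimpleGraph V}

lemma tPath_isPath (hG : G.IsTree) (u v : V) : (tPath G hG u v).IsPath :=
  (hG.existsUnique_path u v).exists.choose_spec

lemma tPath_unique (hG : G.IsTree) {u v : V} {p : G.Walk u v} (hp : p.IsPath) :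
    p = tPath G hG u v :=
  (hG.existsUnique_path u v).unique hp (tPath_isPath hG u v)

lemma tPath_self (hG : G.IsTree) (u : V) : tPath G hG u u = SimpleGraph.Walk.nil :=
  (tPath_unique hG (SimpleGraph.Walk.IsPath.nil)).symm

lemma recvTime_self (hG : G.IsTree) (w : V → V → ℝ) (ρ : ℝ) (σ : V → ℕ) (u : V) :
    recvTime G hG w ρ σ u u = 0 := by
  unfold recvTime
  rw [tPath_self]
  simp

lemma tPath_adj (hG : G.IsTree) {u v : V} (h : G.Adj u v) :
    tPath G hG u v = SimpleGraph.Walk.cons h SimpleGraph.Walk.nil :=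
  (tPath_unique hG (by simp [SimpleGraph.Walk.isPath_def, h.ne])).symm

lemma parent_adj (hG : G.IsTree) {u v : V} (h : G.Adj u v) :
    parent G hG u v = u := by
  unfold parent
  rw [tPath_adj hG h]
  rfl

/-- If `z ∈ O(x,a)` then the unique path from `a` to `z` avoids `x`. -/
lemma tPath_avoid (hG : G.IsTree) {x a z : V} (h : inO G x a z) :
    x ∉ (tPath G hG a z).support := by
  obtain ⟨p, hp⟩ := h
  have h1 : (p.toPath : G.Walk a z) = tPath G hG a z := tPath_unique hG p.toPath.2
  rw [← h1]
  exact fun hx => hp (SimpleGraph.Walk.support_toPath_subset p hx)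

lemma inO_of_tPath_avoid (hG : G.IsTree) {x a z : V}
    (h : x ∉ (tPath G hG a z).support) : inO G x a z :=
  ⟨tPath G hG a z, h⟩

lemma inO_self {x a : V} (h : x ≠ a) : inO G x a a :=
  ⟨SimpleGraph.Walk.nil, by simp [h]⟩

lemma not_inO_self {x a : V} : ¬ inO G x a x := by
  rintro ⟨p, hp⟩
  exact hp p.end_mem_support

/-- Membership in a branch is closed along unique paths. -/
lemma inO_support (hG : G.IsTree) {x a z y : V} (h : inO G x a z)
    (hy : y ∈ (tPath G hG a z).support) : inO G x a y := by
  have havoid := tPath_avoid hG h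
  refine ⟨(tPath G hG a z).takeUntil y hy, fun hx => ?_⟩
  exact havoid (SimpleGraph.Walk.support_takeUntil_subset _ hy hx)

/-- Decomposition of the unique path into `x`'s branch through its neighbor `a`. -/
lemma tPath_cons (hG : G.IsTree) {x a z : V} (hadj : G.Adj x a) (h : inO G x a z) :
    tPath G hG x z = SimpleGraph.Walk.cons hadj (tPath G hG a z) := by
  refine (tPath_unique hG ?_).symm
  exact SimpleGraph.Walk.IsPath.cons (tPath_isPath hG a z) (tPath_avoid hG h)

lemma recv_decomp (hG : G.IsTree) (w : V → V → ℝ) (ρ : ℝ) (σ : V → ℕ)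
    {x a z : V} (hadj : G.Adj x a) (h : inO G x a z) :
    recvTime G hG w ρ σ x z = ((σ a : ℝ) * ρ + w x a) + recvTime G hG w ρ σ a z := by
  unfold recvTime
  rw [tPath_cons hG hadj h]
  simp [SimpleGraph.Walk.darts_cons]

lemma parent_decomp (hG : G.IsTree) {x a z : V} (hadj : G.Adj x a) (h : inO G x a z)
    (hza : z ≠ a) : parent G hG x z = parent G hG a z := by
  unfold parent
  rw [tPath_cons hG hadj h]
  have hlen : 1 ≤ (tPath G hG a z).length := by
    by_contra hl
    push_neg at hl
    interval_cases hl' : (tPath G hG a z).length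
    · have := (tPath G hG a z).getVert_of_length_le (by omega : (tPath G hG a z).length ≤ 0)
      rw [SimpleGraph.Walk.getVert_zero] at this
      exact hza this.symm
  rw [SimpleGraph.Walk.length_cons]
  have h2 : (tPath G hG a z).length + 1 - 1 = ((tPath G hG a z).length - 1) + 1 := by omega
  rw [h2, SimpleGraph.Walk.getVert_cons_succ]

end Aux

section Aux2

set_option linter.unusedSectionVars false

variable {V : Type*} [Fintype V] [DecidableEq V] {G : SimpleGraph V}

lemma getVert_mem_support {u v : V} (p : G.Walk u v) (i : ℕ) :
    p.getVert i ∈ p.support := by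
  rcases le_or_gt i p.length with h | h
  · exact SimpleGraph.Walk.mem_support_iff_exists_getVert.mpr ⟨i, rfl, h⟩
  · rw [p.getVert_of_length_le h.le]
    exact p.end_mem_support

lemma IsPath.getVert_ne {u v : V} {p : G.Walk u v} (hp : p.IsPath) :
    ∀ i j, i < j → j ≤ p.length → p.getVert i ≠ p.getVert j := by
  induction p with
  | nil => intro i j hij hj; simp only [SimpleGraph.Walk.length_nil] at hj; omega
  | cons h q ih =>
    intro i j hij hj
    rcases Nat.exists_eq_add_of_lt hij with ⟨k, rfl⟩
    match i with
    | 0 =>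
      rw [SimpleGraph.Walk.getVert_zero, SimpleGraph.Walk.getVert_cons _ _ (by omega)]
      intro hc
      exact ((SimpleGraph.Walk.cons_isPath_iff _ _).mp hp).2 (hc ▸ getVert_mem_support q _)
    | i + 1 =>
      rw [SimpleGraph.Walk.getVert_cons_succ, SimpleGraph.Walk.getVert_cons _ _ (by omega)]
      have : i + 1 + k + 1 - 1 = i + k + 1 := by omega
      rw [this]
      exact ih ((SimpleGraph.Walk.cons_isPath_iff _ _).mp hp).1 i (i + k + 1) (by omega)
        (by simp [SimpleGraph.Walk.length_cons] at hj; omega)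

lemma inO_disjoint (hG : G.IsTree) {x a c z : V} (ha : G.Adj x a) (hc : G.Adj x c)
    (hac : a ≠ c) (hz : inO G x a z) : ¬ inO G x c z := by
  intro hz'
  have h1 := tPath_cons hG ha hz
  have h2 := tPath_cons hG hc hz'
  have : a = c := by
    have e1 : (tPath G hG x z).getVert 1 = a := by rw [h1]; simp
    have e2 : (tPath G hG x z).getVert 1 = c := by rw [h2]; simp
    rw [e1] at e2; exact e2
  exact hac this

lemma inO_flip_disjoint (hG : G.IsTree) {x a z : V} (ha : G.Adj x a)
    (hz : inO G x a z) : ¬ inO G a x z := by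
  intro hz'
  have h1 := tPath_cons hG ha hz
  have h2 := tPath_avoid hG hz'
  apply h2
  rw [h1]
  simp

lemma inO_cover (hG : G.IsTree) {x a : V} (ha : G.Adj x a) (z : V) :
    inO G x a z ∨ inO G a x z := by
  by_cases hmem : a ∈ (tPath G hG x z).support
  · left
    refine ⟨(tPath G hG x z).dropUntil a hmem, fun hx => ?_⟩
    have hnodup := (tPath_isPath hG x z).2
    rw [← SimpleGraph.Walk.take_spec (tPath G hG x z) hmem,
        SimpleGraph.Walk.support_append] at hnodup
    have hxtake : x ∈ ((tPath G hG x z).takeUntil a hmem).support :=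
      SimpleGraph.Walk.start_mem_support _
    have hxtail : x ∈ (((tPath G hG x z).dropUntil a hmem).support).tail := by
      have hsupp := SimpleGraph.Walk.support_eq_cons ((tPath G hG x z).dropUntil a hmem)
      rw [hsupp] at hx
      rcases List.mem_cons.mp hx with h | h
      · exact (ha.ne h).elim
      · rw [hsupp]; simpa using h
    exact (List.disjoint_of_nodup_append hnodup) hxtake hxtail
  · right
    exact ⟨tPath G hG x z, hmem⟩

lemma inO_sub (hG : G.IsTree) {x a c z : V} (ha : G.Adj x a) (hc : G.Adj x c)
    (hac : a ≠ c) (hz : inO G x a z) : inO G c x z := by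
  have hcz : c ∉ (tPath G hG a z).support := by
    intro hcmem
    exact inO_disjoint hG ha hc hac (inO_support hG hz hcmem) (inO_self hc.ne)
  refine ⟨SimpleGraph.Walk.cons ha (tPath G hG a z), ?_⟩
  simp only [SimpleGraph.Walk.support_cons, List.mem_cons]
  rintro (h | h)
  · exact hc.ne' h
  · exact hcz h

end Aux2

section Aux3

set_option linter.unusedSectionVars false

variable {V : Type*} [Fintype V] [DecidableEq V] {G : SimpleGraph V}

lemma recvTime_nonneg (hG : G.IsTree) {w : V → V → ℝ} {ρ : ℝ}
    (hw : ∀ a b, G.Adj a b → 0 ≤ w a b) (hρ : 0 ≤ ρ) (σ : V → ℕ) (u z : V) :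
    0 ≤ recvTime G hG w ρ σ u z := by
  unfold recvTime
  apply List.sum_nonneg
  intro t ht
  rcases List.mem_map.mp ht with ⟨d, _, rfl⟩
  have := hw _ _ d.adj
  positivity

/-- The canonical globally-injective schedule. -/
noncomputable def defSched (V : Type*) [Fintype V] [DecidableEq V] : V → ℕ :=
  fun z => (Fintype.equivFin V z : ℕ) + 1

lemma defSched_valid (hG : G.IsTree) (u : V) (S : Set V) :
    Valid G hG (defSched V) u S := by
  constructor
  · intro z _ _; exact Nat.le_add_left 1 _
  · intro z₁ _ z₂ _ _ _ hne _ h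
    apply hne
    have : (Fintype.equivFin V z₁ : ℕ) = (Fintype.equivFin V z₂ : ℕ) := by
      unfold defSched at h; omega
    exact (Fintype.equivFin V).injective (Fin.val_injective this)

lemma recv_le_sSup (f : V → ℝ) {S : Set V} {z : V} (hz : z ∈ S) :
    f z ≤ sSup (f '' S) :=
  le_csSup ((S.toFinite.image f).bddAbove) ⟨z, hz, rfl⟩

lemma sSup_recv_le (f : V → ℝ) {S : Set V} (hS : S.Nonempty) {B : ℝ}
    (h : ∀ z ∈ S, f z ≤ B) : sSup (f '' S) ≤ B := by
  apply csSup_le (hS.image f)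
  rintro m ⟨z, hz, rfl⟩
  exact h z hz

lemma bTime_set_nonempty (hG : G.IsTree) (w : V → V → ℝ) (ρ : ℝ) (u : V) (S : Set V) :
    {m | ∃ σ, Valid G hG σ u S ∧ m = sSup ((recvTime G hG w ρ σ u) '' S)}.Nonempty :=
  ⟨_, defSched V, defSched_valid hG u S, rfl⟩

lemma bTime_set_nonneg (hG : G.IsTree) {w : V → V → ℝ} {ρ : ℝ}
    (hw : ∀ a b, G.Adj a b → 0 ≤ w a b) (hρ : 0 ≤ ρ) {u : V} {S : Set V} (hu : u ∈ S) :
    ∀ m ∈ {m | ∃ σ, Valid G hG σ u S ∧ m = sSup ((recvTime G hG w ρ σ u) '' S)}, 0 ≤ m := by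
  rintro m ⟨σ, _, rfl⟩
  calc (0:ℝ) = recvTime G hG w ρ σ u u := (recvTime_self hG w ρ σ u).symm
  _ ≤ _ := recv_le_sSup _ hu

lemma bTime_nonneg (hG : G.IsTree) {w : V → V → ℝ} {ρ : ℝ}
    (hw : ∀ a b, G.Adj a b → 0 ≤ w a b) (hρ : 0 ≤ ρ) {u : V} {S : Set V} (hu : u ∈ S) :
    0 ≤ bTime G hG w ρ u S :=
  le_csInf (bTime_set_nonempty hG w ρ u S) (bTime_set_nonneg hG hw hρ hu)

lemma bTime_bddBelow (hG : G.IsTree) {w : V → V → ℝ} {ρ : ℝ}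
    (hw : ∀ a b, G.Adj a b → 0 ≤ w a b) (hρ : 0 ≤ ρ) {u : V} {S : Set V} (hu : u ∈ S) :
    BddBelow {m | ∃ σ, Valid G hG σ u S ∧ m = sSup ((recvTime G hG w ρ σ u) '' S)} :=
  ⟨0, bTime_set_nonneg hG hw hρ hu⟩

lemma bTime_le (hG : G.IsTree) {w : V → V → ℝ} {ρ : ℝ}
    (hw : ∀ a b, G.Adj a b → 0 ≤ w a b) (hρ : 0 ≤ ρ) {u : V} {S : Set V} (hu : u ∈ S)
    {σ : V → ℕ} (hσ : Valid G hG σ u S) :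
    bTime G hG w ρ u S ≤ sSup ((recvTime G hG w ρ σ u) '' S) :=
  csInf_le (bTime_bddBelow hG hw hρ hu) ⟨σ, hσ, rfl⟩

lemma le_bTime (hG : G.IsTree) {w : V → V → ℝ} {ρ : ℝ} {u : V} {S : Set V} {c : ℝ}
    (h : ∀ σ : V → ℕ, Valid G hG σ u S → c ≤ sSup ((recvTime G hG w ρ σ u) '' S)) :
    c ≤ bTime G hG w ρ u S := by
  apply le_csInf (bTime_set_nonempty hG w ρ u S)
  rintro m ⟨σ, hσ, rfl⟩
  exact h σ hσ

end Aux3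

section Aux4

set_option linter.unusedSectionVars false

variable {V : Type*} [Fintype V] [DecidableEq V] {G : SimpleGraph V}

lemma mem_Obr {x y z : V} : z ∈ Obr G x y ↔ inO G x y z := Iff.rfl

/-- Key lower bound: broadcasting from `u` over `S ⊇ O(u,v)` costs at least the
first slot to `v` plus broadcasting from `v` over `O(u,v)`. -/
lemma lemA (hG : G.IsTree) {w : V → V → ℝ} {ρ : ℝ}
    (hw : ∀ a b, G.Adj a b → 0 ≤ w a b) (hρ : 0 ≤ ρ) {u v : V} (hadj : G.Adj u v)
    {S : Set V} (hOS : Obr G u v ⊆ S) :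
    ρ + w u v + bTime G hG w ρ v (Obr G u v) ≤ bTime G hG w ρ u S := by
  apply le_bTime hG
  intro σ hσ
  have hvO : v ∈ Obr G u v := inO_self hadj.ne
  -- σ is valid for (v, O(u,v))
  have hσ' : Valid G hG σ v (Obr G u v) := by
    constructor
    · intro z hz hzv
      exact hσ.1 z (hOS hz) (fun h => not_inO_self (h ▸ hz))
    · intro z₁ hz₁ z₂ hz₂ hz₁v hz₂v hne hpar
      refine hσ.2 z₁ (hOS hz₁) z₂ (hOS hz₂) (fun h => not_inO_self (h ▸ hz₁))
        (fun h => not_inO_self (h ▸ hz₂)) hne ?_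
      rwa [parent_decomp hG hadj hz₁ hz₁v, parent_decomp hG hadj hz₂ hz₂v]
  have hb : bTime G hG w ρ v (Obr G u v) ≤
      sSup ((recvTime G hG w ρ σ v) '' (Obr G u v)) := bTime_le hG hw hρ hvO hσ'
  -- the sup over the branch is attained
  obtain ⟨z, hz, hzeq⟩ : ∃ z ∈ Obr G u v,
      recvTime G hG w ρ σ v z = sSup ((recvTime G hG w ρ σ v) '' (Obr G u v)) := by
    have hmem : sSup ((recvTime G hG w ρ σ v) '' (Obr G u v)) ∈
        ((recvTime G hG w ρ σ v) '' (Obr G u v)) :=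
      Set.Nonempty.csSup_mem (Set.Nonempty.image _ ⟨v, hvO⟩) ((Obr G u v).toFinite.image _)
    rcases hmem with ⟨z, hz, hzeq⟩
    exact ⟨z, hz, hzeq⟩
  have hrecv : recvTime G hG w ρ σ u z = ((σ v : ℝ) * ρ + w u v) + recvTime G hG w ρ σ v z :=
    recv_decomp hG w ρ σ hadj hz
  have hσv : 1 ≤ σ v := hσ.1 v (hOS hvO) hadj.ne'
  rw [← hzeq] at hb
  have h1 : (1:ℝ) ≤ (σ v : ℝ) := by exact_mod_cast hσv
  have hfin : recvTime G hG w ρ σ u z ≤ sSup ((recvTime G hG w ρ σ u) '' S) :=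
    recv_le_sSup _ (hOS hz)
  nlinarith [hrecv]

end Aux4

section Aux5

set_option linter.unusedSectionVars false
set_option maxHeartbeats 1000000

variable {V : Type*} [Fintype V] [DecidableEq V] {G : SimpleGraph V}

lemma darts_snd_ne_start {u v : V} {p : G.Walk u v} (hp : p.IsPath) :
    ∀ d ∈ p.darts, d.toProd.2 ≠ u := by
  induction p with
  | nil => intro d hd; simp at hd
  | cons h q ih =>
    intro d hd
    rw [SimpleGraph.Walk.darts_cons, List.mem_cons] at hd
    rcases hd with rfl | hd
    · exact h.ne'
    · intro hc
      have := SimpleGraph.Walk.dart_snd_mem_support_of_mem_darts q hd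
      rw [hc] at this
      exact ((SimpleGraph.Walk.cons_isPath_iff _ _).mp hp).2 this

lemma recv_congr (hG : G.IsTree) (w : V → V → ℝ) (ρ : ℝ) {σ σ' : V → ℕ} {u z : V}
    (h : ∀ d ∈ (tPath G hG u z).darts, σ d.toProd.2 = σ' d.toProd.2) :
    recvTime G hG w ρ σ u z = recvTime G hG w ρ σ' u z := by
  unfold recvTime
  congr 1
  apply List.map_congr_left
  intro d hd
  rw [h d hd]

lemma branch_step (hG : G.IsTree) {a x z : V} (hz : inO G a x z) (hzx : z ≠ x) :
    ∃ v, G.Adj x v ∧ inO G a x v ∧ inO G x v z ∧ v ≠ a := by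
  obtain ⟨v, hadj, p', hp'⟩ := SimpleGraph.Walk.exists_eq_cons_of_ne hzx.symm (tPath G hG x z)
  have hpath := tPath_isPath hG x z
  rw [hp'] at hpath
  have hxp' : x ∉ p'.support := ((SimpleGraph.Walk.cons_isPath_iff _ _).mp hpath).2
  have hp'path : p'.IsPath := ((SimpleGraph.Walk.cons_isPath_iff _ _).mp hpath).1
  have hvz : inO G x v z := ⟨p', hxp'⟩
  have hvsupp : v ∈ (tPath G hG x z).support := by
    rw [hp', SimpleGraph.Walk.support_cons]
    exact List.mem_cons_of_mem _ p'.start_mem_support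
  have hav : inO G a x v := inO_support hG hz hvsupp
  have hva : v ≠ a := by
    intro hc
    exact (tPath_avoid hG hz) (hc ▸ hvsupp)
  exact ⟨v, hadj, hav, hvz, hva⟩

lemma parent_mem_Obr (hG : G.IsTree) {x a z : V} (hadj : G.Adj x a) (hz : inO G x a z)
    (hza : z ≠ a) : parent G hG x z ∈ Obr G x a := by
  rw [parent_decomp hG hadj hz hza]
  exact inO_support hG hz (getVert_mem_support _ _)

lemma parent_mem_Obr' (hG : G.IsTree) {a x z : V} (hz : inO G a x z) :
    parent G hG x z ∈ Obr G a x := by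
  exact inO_support hG hz (getVert_mem_support _ _)

/-- Key upper bound: combining a near-optimal schedule on the branch `O(x,a)`
with a near-optimal schedule on the rest. -/
lemma lemB (hG : G.IsTree) {w : V → V → ℝ} {ρ : ℝ}
    (hw : ∀ a b, G.Adj a b → 0 ≤ w a b) (hρ : 0 ≤ ρ) {x a : V} (hadj : G.Adj x a) :
    bTime G hG w ρ x Set.univ ≤
      ρ + max (w x a + bTime G hG w ρ a (Obr G x a)) (bTime G hG w ρ x (Obr G a x)) := by
  set t₁ := bTime G hG w ρ a (Obr G x a) with ht₁
  set t₂ := bTime G hG w ρ x (Obr G a x) with ht₂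
  apply le_of_forall_pos_le_add
  intro ε hε
  -- pick near-optimal schedules on the two parts
  obtain ⟨m₁, ⟨σ₁, hσ₁, rfl⟩, hm₁⟩ :
      ∃ m ∈ {m | ∃ σ, Valid G hG σ a (Obr G x a) ∧
        m = sSup ((recvTime G hG w ρ σ a) '' (Obr G x a))}, m < t₁ + ε :=
    exists_lt_of_csInf_lt (bTime_set_nonempty hG w ρ a (Obr G x a))
      (by show bTime G hG w ρ a (Obr G x a) < t₁ + ε; linarith)
  obtain ⟨m₂, ⟨σ₂, hσ₂, rfl⟩, hm₂⟩ :
      ∃ m ∈ {m | ∃ σ, Valid G hG σ x (Obr G a x) ∧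
        m = sSup ((recvTime G hG w ρ σ x) '' (Obr G a x))}, m < t₂ + ε :=
    exists_lt_of_csInf_lt (bTime_set_nonempty hG w ρ x (Obr G a x))
      (by show bTime G hG w ρ x (Obr G a x) < t₂ + ε; linarith)
  set M₁ := sSup ((recvTime G hG w ρ σ₁ a) '' (Obr G x a)) with hM₁
  set M₂ := sSup ((recvTime G hG w ρ σ₂ x) '' (Obr G a x)) with hM₂
  classical
  -- the combined schedule
  set σ : V → ℕ := fun z => if inO G x a z then (if z = a then 1 else σ₁ z)
      else (if parent G hG x z = x then σ₂ z + 1 else σ₂ z) with hσdef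
  have hσa : σ a = 1 := by simp [hσdef, inO_self hadj.ne]
  have hσ₁eq : ∀ z, inO G x a z → z ≠ a → σ z = σ₁ z := by
    intro z h hza; simp [hσdef, h, hza]
  have hσ₂eq : ∀ z, ¬ inO G x a z → parent G hG x z ≠ x → σ z = σ₂ z := by
    intro z h h'; simp [hσdef, h, h']
  have hσ₂eq' : ∀ z, ¬ inO G x a z → parent G hG x z = x → σ z = σ₂ z + 1 := by
    intro z h h'; simp [hσdef, h, h']
  -- (α) receive times in the branch O(x,a)
  have halpha : ∀ z, inO G x a z →
      recvTime G hG w ρ σ x z = ρ + w x a + recvTime G hG w ρ σ₁ a z := by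
    intro z hz
    have h1 : recvTime G hG w ρ σ x z = ((σ a : ℝ) * ρ + w x a) + recvTime G hG w ρ σ a z :=
      recv_decomp hG w ρ σ hadj hz
    have h2 : recvTime G hG w ρ σ a z = recvTime G hG w ρ σ₁ a z := by
      apply recv_congr hG w ρ
      intro d hd
      have hd2 : d.toProd.2 ∈ (tPath G hG a z).support :=
        SimpleGraph.Walk.dart_snd_mem_support_of_mem_darts _ hd
      have hd2O : inO G x a d.toProd.2 := inO_support hG hz hd2
      have hd2a : d.toProd.2 ≠ a := darts_snd_ne_start (tPath_isPath hG a z) d hd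
      exact hσ₁eq _ hd2O hd2a
    rw [h1, h2, hσa]
    push_cast
    ring
  -- (β) receive times on the other side
  have hbeta : ∀ z, inO G a x z → z ≠ x →
      recvTime G hG w ρ σ x z = recvTime G hG w ρ σ₂ x z + ρ := by
    intro z hz hzx
    obtain ⟨v, hxv, hav, hvz, hva⟩ := branch_step hG hz hzx
    have hvnotA : ¬ inO G x a v := fun hc => (inO_flip_disjoint hG hadj hc) hav
    have hσv : σ v = σ₂ v + 1 := hσ₂eq' v hvnotA (parent_adj hG hxv)
    have hcong : recvTime G hG w ρ σ v z = recvTime G hG w ρ σ₂ v z := by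
      apply recv_congr hG w ρ
      intro d hd
      have hd2 : d.toProd.2 ∈ (tPath G hG v z).support :=
        SimpleGraph.Walk.dart_snd_mem_support_of_mem_darts _ hd
      have hd2v : d.toProd.2 ≠ v := darts_snd_ne_start (tPath_isPath hG v z) d hd
      have hd2O : inO G x v d.toProd.2 := inO_support hG hvz hd2
      have hd2notA : ¬ inO G x a d.toProd.2 := fun hc =>
        inO_disjoint hG hxv hadj hva hd2O hc
      have hpar : parent G hG x d.toProd.2 ≠ x := by
        have := parent_mem_Obr hG hxv hd2O hd2v
        intro hc
        rw [hc] at this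
        exact not_inO_self this
      exact hσ₂eq _ hd2notA hpar
    have h1 : recvTime G hG w ρ σ x z = ((σ v : ℝ) * ρ + w x v) + recvTime G hG w ρ σ v z :=
      recv_decomp hG w ρ σ hxv hvz
    have h2 : recvTime G hG w ρ σ₂ x z =
        ((σ₂ v : ℝ) * ρ + w x v) + recvTime G hG w ρ σ₂ v z :=
      recv_decomp hG w ρ σ₂ hxv hvz
    rw [h1, h2, hcong, hσv]
    push_cast
    ring
  -- (γ) validity of the combined schedule
  have hvalid : Valid G hG σ x Set.univ := by
    constructor
    · intro z _ hzx
      by_cases hzA : inO G x a z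
      · by_cases hza : z = a
        · subst hza; rw [hσa]
        · rw [hσ₁eq z hzA hza]; exact hσ₁.1 z hzA hza
      · have hzB : inO G a x z := (inO_cover hG hadj z).resolve_left hzA
        by_cases hpz : parent G hG x z = x
        · rw [hσ₂eq' z hzA hpz]; omega
        · rw [hσ₂eq z hzA hpz]; exact hσ₂.1 z hzB hzx
    · intro z₁ _ z₂ _ hz₁x hz₂x hne hpar
      by_cases h₁ : inO G x a z₁ <;> by_cases h₂ : inO G x a z₂
      · -- both in the branch O(x,a)
        by_cases ha₁ : z₁ = a
        · have hpz₁ : parent G hG x z₁ = x := by rw [ha₁]; exact parent_adj hG hadj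
          have hz₂a : z₂ ≠ a := fun hc => hne (by rw [ha₁, hc])
          have hmem : parent G hG x z₂ ∈ Obr G x a := parent_mem_Obr hG hadj h₂ hz₂a
          rw [← hpar, hpz₁] at hmem
          exact absurd hmem not_inO_self
        · by_cases ha₂ : z₂ = a
          · have hpz₂ : parent G hG x z₂ = x := by rw [ha₂]; exact parent_adj hG hadj
            have hmem : parent G hG x z₁ ∈ Obr G x a := parent_mem_Obr hG hadj h₁ ha₁
            rw [hpar, hpz₂] at hmem
            exact absurd hmem not_inO_self
          · rw [hσ₁eq z₁ h₁ ha₁, hσ₁eq z₂ h₂ ha₂]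
            refine hσ₁.2 z₁ h₁ z₂ h₂ ha₁ ha₂ hne ?_
            rwa [parent_decomp hG hadj h₁ ha₁, parent_decomp hG hadj h₂ ha₂] at hpar
      · -- z₁ in the branch, z₂ outside
        have hz₂B : inO G a x z₂ := (inO_cover hG hadj z₂).resolve_left h₂
        by_cases ha₁ : z₁ = a
        · have hpz₂ : parent G hG x z₂ = x := by
            rw [← hpar, ha₁]; exact parent_adj hG hadj
          rw [ha₁, hσa, hσ₂eq' z₂ h₂ hpz₂]
          have := hσ₂.1 z₂ hz₂B hz₂x
          omega
        · have hp₁ : parent G hG x z₁ ∈ Obr G x a := parent_mem_Obr hG hadj h₁ ha₁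
          have hp₂ : parent G hG x z₂ ∈ Obr G a x := parent_mem_Obr' hG hz₂B
          rw [hpar] at hp₁
          exact absurd hp₂ (inO_flip_disjoint hG hadj hp₁)
      · -- z₂ in the branch, z₁ outside
        have hz₁B : inO G a x z₁ := (inO_cover hG hadj z₁).resolve_left h₁
        by_cases ha₂ : z₂ = a
        · have hpz₁ : parent G hG x z₁ = x := by
            rw [hpar, ha₂]; exact parent_adj hG hadj
          rw [ha₂, hσa, hσ₂eq' z₁ h₁ hpz₁]
          have := hσ₂.1 z₁ hz₁B hz₁x
          omega
        · have hp₂ : parent G hG x z₂ ∈ Obr G x a := parent_mem_Obr hG hadj h₂ ha₂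
          have hp₁ : parent G hG x z₁ ∈ Obr G a x := parent_mem_Obr' hG hz₁B
          rw [← hpar] at hp₂
          exact absurd hp₁ (inO_flip_disjoint hG hadj hp₂)
      · -- both outside the branch
        have hz₁B : inO G a x z₁ := (inO_cover hG hadj z₁).resolve_left h₁
        have hz₂B : inO G a x z₂ := (inO_cover hG hadj z₂).resolve_left h₂
        have hσ₂ne : σ₂ z₁ ≠ σ₂ z₂ := hσ₂.2 z₁ hz₁B z₂ hz₂B hz₁x hz₂x hne hpar
        by_cases hpx : parent G hG x z₁ = x
        · have hpx₂ : parent G hG x z₂ = x := hpar ▸ hpx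
          rw [hσ₂eq' z₁ h₁ hpx, hσ₂eq' z₂ h₂ hpx₂]
          omega
        · have hpx₂ : parent G hG x z₂ ≠ x := hpar ▸ hpx
          rw [hσ₂eq z₁ h₁ hpx, hσ₂eq z₂ h₂ hpx₂]
          exact hσ₂ne
  -- (δ) conclude
  have hxB : x ∈ Obr G a x := inO_self hadj.ne'
  have hM₂0 : (0:ℝ) ≤ M₂ := by
    have := recv_le_sSup (recvTime G hG w ρ σ₂ x) hxB
    rwa [recvTime_self] at this
  have hsup : sSup ((recvTime G hG w ρ σ x) '' Set.univ) ≤ ρ + max (w x a + M₁) M₂ := by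
    apply sSup_recv_le _ ⟨x, Set.mem_univ x⟩
    intro z _
    by_cases hzA : inO G x a z
    · rw [halpha z hzA]
      have h1 : recvTime G hG w ρ σ₁ a z ≤ M₁ := recv_le_sSup _ hzA
      have h2 : w x a + M₁ ≤ max (w x a + M₁) M₂ := le_max_left _ _
      linarith
    · by_cases hzx : z = x
      · rw [hzx, recvTime_self]
        have h2 : M₂ ≤ max (w x a + M₁) M₂ := le_max_right _ _
        linarith
      · have hzB : inO G a x z := (inO_cover hG hadj z).resolve_left hzA
        rw [hbeta z hzB hzx]
        have h1 : recvTime G hG w ρ σ₂ x z ≤ M₂ := recv_le_sSup _ hzB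
        have h2 : M₂ ≤ max (w x a + M₁) M₂ := le_max_right _ _
        linarith
  have hstep : bTime G hG w ρ x Set.univ ≤ ρ + max (w x a + M₁) M₂ :=
    le_trans (bTime_le hG hw hρ (Set.mem_univ x) hvalid) hsup
  have hmax : max (w x a + M₁) M₂ ≤ max (w x a + t₁) t₂ + ε := by
    apply max_le
    · have := le_max_left (w x a + t₁) t₂; linarith
    · have := le_max_right (w x a + t₁) t₂; linarith
  linarith

end Aux5

section Aux6

set_option linter.unusedSectionVars false
set_option maxHeartbeats 1000000

variable {V : Type*} [Fintype V] [DecidableEq V] {G : SimpleGraph V}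

/-- The local unimodality step: if the broadcast time strictly increases from `a`
to its neighbor `x`, it strictly increases further to any other neighbor `c`. -/
lemma lemC (hG : G.IsTree) {w : V → V → ℝ} {ρ : ℝ}
    (hw : ∀ a b, G.Adj a b → 0 ≤ w a b) (hρ : 0 < ρ) {a x c : V}
    (ha : G.Adj x a) (hc : G.Adj x c) (hac : a ≠ c)
    (hlt : bTimeT G hG w ρ a < bTimeT G hG w ρ x) :
    bTimeT G hG w ρ x < bTimeT G hG w ρ c := by
  set A := w x a + bTime G hG w ρ a (Obr G x a) with hA
  set t' := bTime G hG w ρ x (Obr G a x) with ht'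
  have h1 : ρ + w a x + t' ≤ bTimeT G hG w ρ a :=
    lemA hG hw hρ.le ha.symm (Set.subset_univ _)
  have h2 : bTimeT G hG w ρ x ≤ ρ + max A t' := lemB hG hw hρ.le ha
  have h3 : bTimeT G hG w ρ x ≤ ρ + A := by
    by_cases hAt : A ≤ t'
    · rw [max_eq_right hAt] at h2
      have := hw a x ha.symm
      linarith
    · rw [max_eq_left (le_of_not_ge hAt)] at h2
      exact h2
  have h4 : ρ + w x a + bTime G hG w ρ a (Obr G x a) ≤ bTime G hG w ρ x (Obr G c x) :=
    lemA hG hw hρ.le ha (fun z hz => inO_sub hG ha hc hac hz)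
  have h5 : ρ + w c x + bTime G hG w ρ x (Obr G c x) ≤ bTimeT G hG w ρ c :=
    lemA hG hw hρ.le hc.symm (Set.subset_univ _)
  have := hw c x hc.symm
  linarith

/-- Monotonicity of broadcast time along the path away from a broadcast center. -/
lemma lemM (hG : G.IsTree) {w : V → V → ℝ} {ρ : ℝ}
    (hw : ∀ a b, G.Adj a b → 0 ≤ w a b) (hρ : 0 < ρ) {x κ x' : V}
    (hκmin : ∀ v, bTimeT G hG w ρ κ ≤ bTimeT G hG w ρ v)
    (hκx : bTimeT G hG w ρ κ < bTimeT G hG w ρ x)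
    (hx' : ¬ inO G x κ x') (hne : x' ≠ x) :
    bTimeT G hG w ρ x < bTimeT G hG w ρ x' := by
  have hκne : κ ≠ x := fun h => absurd (h ▸ hκx) (lt_irrefl _)
  set p := tPath G hG κ x' with hp
  have hpp : p.IsPath := tPath_isPath hG κ x'
  have hxp : x ∈ p.support := by
    by_contra hxs
    exact hx' ⟨p, hxs⟩
  obtain ⟨m, hmx, hmn⟩ := SimpleGraph.Walk.mem_support_iff_exists_getVert.mp hxp
  set n := p.length with hn
  set b : ℕ → ℝ := fun i => bTimeT G hG w ρ (p.getVert i) with hb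
  have hm1 : 1 ≤ m := by
    rcases Nat.eq_zero_or_pos m with h | h
    · exfalso; apply hκne; rw [← hmx, h, SimpleGraph.Walk.getVert_zero]
    · exact h
  have hmltn : m < n := by
    rcases lt_or_eq_of_le hmn with h | h
    · exact h
    · exfalso; apply hne; rw [← p.getVert_length, ← hn, ← h, hmx]
  have hadj : ∀ i, i < n → G.Adj (p.getVert i) (p.getVert (i + 1)) :=
    fun i hi => p.adj_getVert_succ hi
  have hinj : ∀ i j, i < j → j ≤ n → p.getVert i ≠ p.getVert j :=
    IsPath.getVert_ne hpp
  have hstep : ∀ j, j + 1 < n → b j < b (j + 1) → b (j + 1) < b (j + 2) := by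
    intro j hj hlt'
    exact lemC hG hw hρ (hadj j (by omega)).symm (hadj (j + 1) hj)
      (hinj j (j + 2) (by omega) (by omega)) hlt'
  -- there is a strict increase before m
  have hex : ∃ i, i < m ∧ b i < b (i + 1) := by
    by_contra hco
    push_neg at hco
    have hmono : ∀ k, k ≤ m → b k ≤ b 0 := by
      intro k
      induction k with
      | zero => intro _; exact le_refl _
      | succ k ih =>
        intro hk
        exact le_trans (hco k (by omega)) (ih (by omega))
    have h0 : b 0 = bTimeT G hG w ρ κ := by
      rw [hb]; simp
    have hmval : b m = bTimeT G hG w ρ x := by rw [hb]; simp [hmx]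
    have := hmono m le_rfl
    rw [h0, hmval] at this
    linarith
  obtain ⟨i, him, hib⟩ := hex
  -- strictly increasing from i on
  have hchain : ∀ j, i ≤ j → j < n → b j < b (j + 1) := by
    intro j
    induction j with
    | zero =>
      intro hij _
      have : i = 0 := by omega
      rw [this] at hib
      exact hib
    | succ j ih =>
      intro hij hjn
      rcases Nat.lt_or_ge i (j + 1) with h | h
      · have hjlt : j < n := by omega
        have hprev : b j < b (j + 1) := ih (by omega) hjlt
        exact hstep j hjn hprev
      · have : i = j + 1 := by omega
        rw [this] at hib
        exact hib
  have hmono2 : ∀ k, m < k → k ≤ n → b m < b k := by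
    intro k
    induction k with
    | zero => intro h _; omega
    | succ k ih =>
      intro hk hkn
      rcases Nat.lt_or_ge m k with h | h
      · exact lt_trans (ih h (by omega)) (hchain k (by omega) (by omega))
      · have : k = m := by omega
        rw [this]
        exact hchain m (by omega) (by omega)
  have hfin := hmono2 n hmltn le_rfl
  have hmval : b m = bTimeT G hG w ρ x := by rw [hb]; simp [hmx]
  have hnval : b n = bTimeT G hG w ρ x' := by
    rw [hb]
    simp only [hn]
    rw [p.getVert_length]
  rw [hmval, hnval] at hfin
  exact hfin

end Aux6

section Aux7

set_option linter.unusedSectionVars false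
set_option maxHeartbeats 1000000

variable {V : Type*} [Fintype V] [DecidableEq V] {G : SimpleGraph V}

/-- A uniform upper bound on broadcast times over all scenarios. -/
lemma bTimeT_bound (hG : G.IsTree) (lo hi : V → V → ℝ)
    (hlo : ∀ a b, G.Adj a b → 0 ≤ lo a b) {ρ : ℝ} (hρ : 0 ≤ ρ) :
    ∃ C : ℝ, ∀ w, Scenario G lo hi w → ∀ u, bTimeT G hG w ρ u ≤ C := by
  classical
  set Mtot := ∑ q : V × V, |hi q.1 q.2| with hMtot
  set B := (Fintype.card V : ℝ) * ρ + Mtot with hB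
  have hMtot0 : 0 ≤ Mtot := Finset.sum_nonneg (fun q _ => abs_nonneg _)
  have hB0 : 0 ≤ B := by positivity
  refine ⟨(Fintype.card V : ℝ) * B, ?_⟩
  intro w hw u
  have hw0 : ∀ a b, G.Adj a b → 0 ≤ w a b :=
    fun a b h => le_trans (hlo a b h) ((hw.2 a b h).1)
  refine le_trans (bTime_le hG hw0 hρ (Set.mem_univ u) (defSched_valid hG u _)) ?_
  apply sSup_recv_le _ ⟨u, Set.mem_univ u⟩
  intro z _
  unfold recvTime
  have hterm : ∀ t ∈ ((tPath G hG u z).darts.map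
      (fun d => (defSched V d.toProd.2 : ℝ) * ρ + w d.toProd.1 d.toProd.2)), t ≤ B := by
    intro t ht
    rcases List.mem_map.mp ht with ⟨d, _, rfl⟩
    have h1 : (defSched V d.toProd.2 : ℝ) ≤ (Fintype.card V : ℝ) := by
      have := (Fintype.equivFin V d.toProd.2).isLt
      unfold defSched
      exact_mod_cast this
    have h2 : w d.toProd.1 d.toProd.2 ≤ Mtot := by
      refine le_trans ((hw.2 _ _ d.adj).2) (le_trans (le_abs_self _) ?_)
      exact Finset.single_le_sum (f := fun q : V × V => |hi q.1 q.2|)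
        (fun q _ => abs_nonneg _) (Finset.mem_univ (d.toProd.1, d.toProd.2))
    rw [hB]
    have := mul_le_mul_of_nonneg_right h1 hρ
    linarith
  refine le_trans (List.sum_le_card_nsmul _ _ hterm) ?_
  rw [List.length_map, SimpleGraph.Walk.length_darts, nsmul_eq_mul]
  have hlen : ((tPath G hG u z).length : ℝ) ≤ (Fintype.card V : ℝ) := by
    exact_mod_cast (tPath_isPath hG u z).length_lt.le
  exact mul_le_mul_of_nonneg_right hlen hB0

end Aux7
/-- If `s̈(x)` is a worst-case scenario for `x`, `x ∉ B_Ctr^{s̈(x)}`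
and `κ ∈ B_Ctr^{s̈(x)}`, then every vertex `x'` outside `V(O(x,κ)) ∪ {x}` has
strictly larger maximum regret than `x`; hence a minmax-regret broadcast center
lies in `V(O(x,κ)) ∪ {x}`. -/
theorem stmt10 {V : Type*} [Fintype V] [DecidableEq V] (G : SimpleGraph V) (hG : G.IsTree)
    (lo hi : V → V → ℝ) (hlo : ∀ a b, G.Adj a b → 0 ≤ lo a b)
    (hlohi : ∀ a b, G.Adj a b → lo a b ≤ hi a b) (ρ : ℝ) (hρ : 0 < ρ)
    (x κ : V) (s : V → V → ℝ) (hws : WorstCase G hG lo hi ρ x s)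
    (hx : x ∉ BCtr G hG s ρ) (hκ : κ ∈ BCtr G hG s ρ) :
    (∀ x', x' ∉ Obr G x κ → x' ≠ x →
        maxRegret G hG lo hi ρ x < maxRegret G hG lo hi ρ x') ∧
      ∃ z ∈ Obr G x κ ∪ {x}, ∀ v, maxRegret G hG lo hi ρ z ≤ maxRegret G hG lo hi ρ v := by
  classical
  obtain ⟨hsc, y₀, hy₀⟩ := hws
  have hs0 : ∀ a b, G.Adj a b → 0 ≤ s a b :=
    fun a b h => le_trans (hlo a b h) ((hsc.2 a b h).1)
  obtain ⟨C, hC⟩ := bTimeT_bound hG lo hi hlo hρ.le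
  have hmem : ∀ v : V, (bTimeT G hG s ρ v - bTimeT G hG s ρ κ) ∈
      {r | ∃ w y, Scenario G lo hi w ∧ r = bTimeT G hG w ρ v - bTimeT G hG w ρ y} :=
    fun v => ⟨s, κ, hsc, rfl⟩
  have hbdd : ∀ v : V, BddAbove
      {r | ∃ w y, Scenario G lo hi w ∧ r = bTimeT G hG w ρ v - bTimeT G hG w ρ y} := by
    intro v
    refine ⟨C, ?_⟩
    rintro r ⟨w, y, hwsc, rfl⟩
    have h1 := hC w hwsc v
    have h2 : (0:ℝ) ≤ bTimeT G hG w ρ y :=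
      bTime_nonneg hG (fun a b h => le_trans (hlo a b h) ((hwsc.2 a b h).1)) hρ.le
        (Set.mem_univ y)
    linarith
  have hκx : bTimeT G hG s ρ κ < bTimeT G hG s ρ x := by
    have hx' : ¬ ∀ v, bTimeT G hG s ρ x ≤ bTimeT G hG s ρ v := hx
    push_neg at hx'
    obtain ⟨v, hv⟩ := hx'
    exact lt_of_le_of_lt (hκ v) hv
  have hmrx : maxRegret G hG lo hi ρ x = bTimeT G hG s ρ x - bTimeT G hG s ρ κ := by
    apply le_antisymm
    · have h1 := hκ y₀
      rw [← hy₀]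
      linarith
    · exact le_csSup (hbdd x) (hmem x)
  have hmain : ∀ x', x' ∉ Obr G x κ → x' ≠ x →
      maxRegret G hG lo hi ρ x < maxRegret G hG lo hi ρ x' := by
    intro x' h1 h2
    have hlt : bTimeT G hG s ρ x < bTimeT G hG s ρ x' := lemM hG hs0 hρ hκ hκx h1 h2
    have hle : bTimeT G hG s ρ x' - bTimeT G hG s ρ κ ≤ maxRegret G hG lo hi ρ x' :=
      le_csSup (hbdd x') (hmem x')
    rw [hmrx]
    linarith
  refine ⟨hmain, ?_⟩
  obtain ⟨z, _, hz⟩ := Finset.exists_min_image Finset.univ (maxRegret G hG lo hi ρ)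
    ⟨x, Finset.mem_univ x⟩
  refine ⟨z, ?_, fun v => hz v (Finset.mem_univ v)⟩
  by_contra hzc
  simp only [Set.mem_union, Set.mem_singleton_iff, not_or] at hzc
  exact absurd (hz x (Finset.mem_univ x)) (not_le.mpr (hmain z hzc.1 hzc.2))

end Postal
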